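/- Let A be a positive integer not divisible by 4 and suppose A² + 4 = q^k for an odd prime q and integer k ≥ 2. Then A = 2 or A = 11. -/

import Mathlib

/-!
Since `A` is odd, `A ^ 2 + 4 ≡ 5 [ZMOD 8]` is not a square, so `k` is odd. The factors `A + 2i` and
`A - 2i` are coprime in `ℤ[i]`, whose units are all `k`-th powers, hence `A + 2i = (a + bi) ^ k`.
Then `b ∣ Im ((a + bi) ^ k) = 2`, and parity forces `b = ±2` with `a` odd.

The binomial expansion gives `Im ((a + bi) ^ k) ≡ k a ^ (k - 1) b [ZMOD 2 ^ (r + 2)]` whenever `2 ∣ b`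
and `2 ^ r ∣ k - 1`. For `b = 2` this lifts `2 ^ r ∣ k - 1` to `2 ^ (r + 1) ∣ k - 1`, so `k = 1`.
For `b = -2` it gives `k ≡ 3 [MOD 4]`. Modulo `Re ((a - 2i) ^ 2) = a ^ 2 - 4`, the powers of
`a - 2i` are periodic up to a factor `-(a ^ 2 + 4) ^ 2 ≡ -64`, and a Jacobi symbol computation
then rules out `a ^ 2 ≥ 9`. For `a = ±1`, reducing modulo the two primes of `ℤ[i]` above `13`
forces `3 ∣ k`, and `(a - 2i) ^ 3 = -11a + 2i` brings us back to the case `b = 2`: `k = 3` and `A = ∓11`.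
-/

local notation "ℤ[i]" => GaussianInt

theorem Int.two_pow_add_three_dvd_pow_two_pow_sub_one {a : ℤ} (ha : Odd a) (r : ℕ) :
    2 ^ (r + 3) ∣ a ^ 2 ^ (r + 1) - 1 := by
  induction r with
  | zero => simpa using Int.eight_dvd_sq_sub_one_of_odd ha
  | succ r ih =>
    have h2 : (2 : ℤ) ∣ a ^ 2 ^ (r + 1) + 1 := even_iff_two_dvd.mp ha.pow.add_one
    calc (2 : ℤ) ^ (r + 1 + 3) = 2 ^ (r + 3) * 2 := by ring
      _ ∣ (a ^ 2 ^ (r + 1) - 1) * (a ^ 2 ^ (r + 1) + 1) := mul_dvd_mul ih h2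
      _ = a ^ 2 ^ (r + 1 + 1) - 1 := by ring

theorem Int.two_pow_add_two_dvd_pow_sub_one {a : ℤ} (ha : Odd a) {r m : ℕ} (hr : 1 ≤ r)
    (hm : 2 ^ r ∣ m) : 2 ^ (r + 2) ∣ a ^ m - 1 := by
  obtain ⟨u, rfl⟩ := hm
  obtain ⟨s, rfl⟩ := Nat.exists_eq_add_of_le' hr
  rw [pow_mul]
  simpa using (a.two_pow_add_three_dvd_pow_two_pow_sub_one ha s).trans
    (sub_dvd_pow_sub_pow _ 1 u)

theorem Nat.add_two_le_of_two_pow_le {s j : ℕ} (hj : 3 ≤ j) (h : 2 ^ s ≤ j) : s + 2 ≤ j := by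
  rcases Nat.lt_or_ge s 2 with hs | hs
  · omega
  · obtain ⟨t, rfl⟩ := Nat.exists_eq_add_of_le' hs
    have h1 : t < 2 ^ t := Nat.lt_two_pow_self
    have h2 : 2 ^ (t + 2) = 4 * 2 ^ t := by ring
    omega

theorem Nat.sub_one_dvd_mul_sub_one_mul_choose {p j : ℕ} (hj : 2 ≤ j) :
    p - 1 ∣ j * (j - 1) * p.choose j := by
  obtain ⟨i, rfl⟩ := Nat.exists_eq_add_of_le' hj
  rcases Nat.lt_or_ge p 2 with hp | hp
  · simp [Nat.choose_eq_zero_of_lt (show p < i + 2 by omega)]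
  obtain ⟨n, rfl⟩ := Nat.exists_eq_add_of_le' hp
  have h1 := Nat.add_one_mul_choose_eq n i
  have h2 := Nat.add_one_mul_choose_eq (n + 1) (i + 1)
  refine ⟨(n + 2) * n.choose i, ?_⟩
  calc (i + 2) * (i + 2 - 1) * (n + 2).choose (i + 2)
      = (n + 1 + 1).choose (i + 1 + 1) * (i + 1 + 1) * (i + 1) := by
        rw [show i + 2 - 1 = i + 1 by omega]; ring
    _ = (n + 2) * ((n + 1) * n.choose i) := by rw [← h2, h1]; ring
    _ = (n + 2 - 1) * ((n + 2) * n.choose i) := by rw [show n + 2 - 1 = n + 1 by omega]; ring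

theorem Nat.two_pow_add_two_dvd_two_pow_mul_choose {p j r : ℕ} (hj : 3 ≤ j)
    (hr : 2 ^ r ∣ p - 1) : 2 ^ (r + 2) ∣ 2 ^ j * p.choose j := by
  have hdvd := hr.trans (Nat.sub_one_dvd_mul_sub_one_mul_choose (p := p) (by omega : 2 ≤ j))
  obtain ⟨s, t, ht, hst⟩ := Nat.exists_eq_two_pow_mul_odd (n := j * (j - 1))
    (Nat.mul_ne_zero (by omega) (by omega))
  have hs : 2 ^ r ∣ 2 ^ s * p.choose j := by
    rw [hst, mul_right_comm] at hdvd
    exact (Nat.Coprime.pow_left r (Nat.coprime_two_left.mpr ht)).dvd_of_dvd_mul_right hdvd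
  have hsj : s + 2 ≤ j := by
    have hcop : Nat.Coprime j (j - 1) :=
      (Nat.coprime_self_sub_right (by omega)).mpr (Nat.coprime_one_right j)
    rcases Nat.eq_zero_or_pos s with rfl | hs0
    · omega
    refine Nat.add_two_le_of_two_pow_le hj ?_
    rcases (hcop.isPrimePow_dvd_mul (Nat.prime_two.isPrimePow.pow hs0.ne')).mp ⟨t, hst⟩ with h | h
    · exact Nat.le_of_dvd (by omega) h
    · exact (Nat.le_of_dvd (by omega) h).trans (Nat.sub_le j 1)
  calc 2 ^ (r + 2) = 2 ^ r * 4 := by ring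
    _ ∣ 2 ^ s * p.choose j * 4 := mul_dvd_mul_right hs 4
    _ = 2 ^ (s + 2) * p.choose j := by ring
    _ ∣ 2 ^ j * p.choose j := mul_dvd_mul_right (pow_dvd_pow 2 hsj) _

theorem Int.not_natCast_dvd_one_add_eight_mul_neg_sixty_four_pow {N : ℕ} (hN : N % 8 = 5)
    (w : ℕ) : ¬ (N : ℤ) ∣ 1 + 8 * (-64) ^ w := by
  intro hdvd
  have hodd : Odd N := Nat.odd_iff.mpr (by omega)
  have hJ : jacobiSym ((-1) ^ (w + 1) * 2 ^ (6 * w + 3)) N = jacobiSym 1 N := by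
    apply jacobiSym.mod_left'
    refine Int.modEq_iff_dvd.mpr ?_
    convert hdvd using 1
    rw [show (-64 : ℤ) = (-1) * 2 ^ 6 by norm_num, mul_pow, ← pow_mul, pow_succ, pow_add]
    ring
  rw [jacobiSym.one_left, jacobiSym.mul_left, jacobiSym.pow_left, jacobiSym.pow_left,
    jacobiSym.at_neg_one hodd, jacobiSym.at_two hodd, ZMod.χ₄_nat_eq_if_mod_four,
    ZMod.χ₈_nat_eq_if_mod_eight] at hJ
  simp [show N % 2 = 1 by omega, show N % 4 = 1 by omega, hN, pow_succ, pow_mul] at hJ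

theorem Int.sq_add_four_ne_sq {A : ℤ} (hA : Odd A) (z : ℤ) : A ^ 2 + 4 ≠ z ^ 2 := by
  intro h
  rcases Int.even_or_odd z with hz | hz
  · have : Even (A ^ 2) := by
      rw [show A ^ 2 = z ^ 2 - 4 by linarith]
      exact (hz.pow_of_ne_zero two_ne_zero).sub (by decide)
    exact (Int.not_even_iff_odd.mpr hA.pow) this
  · have h1 := Int.eight_dvd_sq_sub_one_of_odd hA
    have h2 := Int.eight_dvd_sq_sub_one_of_odd hz
    omega

theorem Zsqrtd.norm_pow {d : ℤ} (z : ℤ√d) (n : ℕ) : (z ^ n).norm = z.norm ^ n :=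
  map_pow Zsqrtd.normMonoidHom z n

namespace GaussianInt

theorem dvd_im_pow (a b : ℤ) (n : ℕ) : b ∣ ((⟨a, b⟩ : ℤ[i]) ^ n).im := by
  induction n with
  | zero => simp
  | succ n ih =>
    rw [pow_succ, Zsqrtd.im_mul]
    exact dvd_add (dvd_mul_left b _) (ih.mul_right a)

theorem pow_four_eq_one_of_isUnit {u : ℤ[i]} (hu : IsUnit u) : u ^ 4 = 1 := by
  have hn : u.re * u.re + u.im * u.im = 1 := by
    have := (Zsqrtd.norm_eq_one_iff' (by norm_num) u).mpr hu
    rw [Zsqrtd.norm_def] at this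
    linarith
  have hri : u.re * u.im = 0 := by
    by_contra h
    have : 0 < (u.re * u.im) ^ 2 := by positivity
    nlinarith [sq_nonneg (u.re ^ 2 - u.im ^ 2)]
  ext <;> simp only [pow_succ, pow_zero, one_mul, Zsqrtd.re_mul, Zsqrtd.im_mul, Zsqrtd.re_one,
    Zsqrtd.im_one]
  · linear_combination (u.re * u.re + u.im * u.im + 1) * hn - 8 * u.re * u.im * hri
  · linear_combination 4 * (u.re * u.re - u.im * u.im) * hri

theorem exists_pow_eq_of_isUnit {u : ℤ[i]} (hu : IsUnit u) {n : ℕ} (hn : Odd n) :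
    ∃ v, v ^ n = u := by
  obtain ⟨m, rfl⟩ := hn
  refine ⟨u ^ (2 * m + 1), ?_⟩
  rw [← pow_mul, show (2 * m + 1) * (2 * m + 1) = 4 * (m * m + m) + 1 by ring, pow_succ,
    pow_mul, pow_four_eq_one_of_isUnit hu, one_pow, one_mul]

theorem isCoprime_mk_two_mk_neg_two {A : ℤ} (hA : Odd A) :
    IsCoprime (⟨A, 2⟩ : ℤ[i]) ⟨A, -2⟩ := by
  obtain ⟨s, t, hst⟩ : IsCoprime (A ^ 2 + 4) (2 ^ 4) :=
    (Int.isCoprime_two_right.mpr (hA.pow.add_even (by decide))).pow_right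
  -- `A ^ 2 + 4 = ⟨A, 2⟩ * ⟨A, -2⟩` and `16 = ⟨0, 4⟩ * (⟨A, -2⟩ - ⟨A, 2⟩)`
  refine ⟨s * ⟨A, -2⟩ - ⟨0, 4 * t⟩, ⟨0, 4 * t⟩, ?_⟩
  ext <;> simp only [Zsqrtd.smul_val, Zsqrtd.re_add, Zsqrtd.re_sub, Zsqrtd.re_mul, Zsqrtd.re_one,
    Zsqrtd.im_add, Zsqrtd.im_sub, Zsqrtd.im_mul, Zsqrtd.im_one]
  · linear_combination hst
  · ring

theorem exists_pow_eq_mk_two_of_sq_add_four_eq_pow {A y : ℤ} (hA : Odd A) {n : ℕ} (hn : Odd n)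
    (h : A ^ 2 + 4 = y ^ n) : ∃ γ : ℤ[i], γ ^ n = ⟨A, 2⟩ := by
  have hmul : (⟨A, 2⟩ : ℤ[i]) * ⟨A, -2⟩ = (y : ℤ[i]) ^ n := by
    rw [← Int.cast_pow, ← h]
    ext <;> simp only [Zsqrtd.re_mul, Zsqrtd.im_mul, Zsqrtd.re_intCast, Zsqrtd.im_intCast] <;> ring
  obtain ⟨δ, u, hδ⟩ := exists_associated_pow_of_mul_eq_pow' (isCoprime_mk_two_mk_neg_two hA) hmul
  obtain ⟨v, hv⟩ := exists_pow_eq_of_isUnit u.isUnit hn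
  exact ⟨δ * v, by rw [mul_pow, hv, hδ]⟩

/-- `γ ^ (2m) + N(γ) ^ m = 2 Re(γ ^ m) γ ^ m`, so `γ ^ (2m) ≡ -N(γ) ^ m` modulo `Re(γ ^ m)`. -/
theorem re_pow_dvd_pow_add_sub (γ : ℤ[i]) (m w δ : ℕ) :
    ((γ ^ m).re : ℤ[i]) ∣ γ ^ (δ + 2 * m * w) - γ ^ δ * ((-γ.norm ^ m) ^ w : ℤ) := by
  have hN : (γ.norm : ℤ[i]) ^ m = γ ^ m * star (γ ^ m) := by
    rw [← Zsqrtd.norm_eq_mul_conj, Zsqrtd.norm_pow, Int.cast_pow]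
  have hre : ∀ z : ℤ[i], z + star z = ((2 * z.re : ℤ) : ℤ[i]) := fun z => by
    ext <;> simp only [Zsqrtd.re_add, Zsqrtd.re_star, Zsqrtd.re_intCast, Zsqrtd.im_add,
      Zsqrtd.im_star, Zsqrtd.im_intCast] <;> ring
  have hsq : ((γ ^ m).re : ℤ[i]) ∣ γ ^ (2 * m) - ((-γ.norm ^ m : ℤ) : ℤ[i]) :=
    ⟨2 * γ ^ m, by
      have h2 := hre (γ ^ m)
      push_cast at h2 ⊢
      linear_combination hN + γ ^ m * h2⟩
  have := (hsq.trans (sub_dvd_pow_sub_pow _ _ w)).mul_left (γ ^ δ)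
  convert this using 1
  push_cast
  ring

theorem re_pow_dvd_im_pow_add_sub (γ : ℤ[i]) (m w δ : ℕ) :
    (γ ^ m).re ∣ (γ ^ (δ + 2 * m * w)).im - (-γ.norm ^ m) ^ w * (γ ^ δ).im := by
  have := ((Zsqrtd.intCast_dvd _ _).mp (re_pow_dvd_pow_add_sub γ m w δ)).2
  generalize (-γ.norm ^ m) ^ w = c at this ⊢
  simpa [Zsqrtd.im_mul, mul_comm] using this

theorem odd_im_pow_of_even_of_odd {a b : ℤ} (ha : Even a) (hb : Odd b) {n : ℕ} (hn : Odd n) :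
    Odd ((⟨a, b⟩ : ℤ[i]) ^ n).im := by
  obtain ⟨m, rfl⟩ := hn
  have hpow : (⟨0, b⟩ : ℤ[i]) ^ (2 * m + 1) = ((-b ^ 2) ^ m : ℤ) * ⟨0, b⟩ := by
    rw [pow_succ, pow_mul, show (⟨0, b⟩ : ℤ[i]) ^ 2 = ((-b ^ 2 : ℤ) : ℤ[i]) by ext <;> simp [sq]]
    push_cast
    ring
  have h2 : ((2 : ℤ) : ℤ[i]) ∣ (⟨a, b⟩ : ℤ[i]) ^ (2 * m + 1) - (⟨0, b⟩ : ℤ[i]) ^ (2 * m + 1) := by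
    refine dvd_trans ?_ (sub_dvd_pow_sub_pow _ _ _)
    obtain ⟨c, rfl⟩ := ha
    exact ⟨⟨c, 0⟩, by ext <;> simp only [Zsqrtd.re_sub, Zsqrtd.im_sub, Zsqrtd.re_mul,
      Zsqrtd.im_mul, Zsqrtd.re_intCast, Zsqrtd.im_intCast] <;> ring⟩
  have him := ((Zsqrtd.intCast_dvd _ _).mp h2).2
  have hc : ∀ c : ℤ, ((c : ℤ[i]) * ⟨0, b⟩).im = c * b := fun c => by simp
  rw [Zsqrtd.im_sub, hpow, hc] at him
  have hodd : Odd ((-b ^ 2) ^ m * b) := (hb.pow.neg.pow).mul hb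
  simpa using (even_iff_two_dvd.mpr him).add_odd hodd

theorem odd_and_eq_two_or_neg_two_of_pow_eq_mk_two {A a b : ℤ} (hA : Odd A) {k : ℕ}
    (hk : Odd k) (h : (⟨a, b⟩ : ℤ[i]) ^ k = ⟨A, 2⟩) : Odd a ∧ (b = 2 ∨ b = -2) := by
  have him : ((⟨a, b⟩ : ℤ[i]) ^ k).im = 2 := by rw [h]
  have hab : Odd (a ^ 2 + b ^ 2) := by
    have hN := congrArg Zsqrtd.norm h
    rw [Zsqrtd.norm_pow] at hN
    have : (a ^ 2 + b ^ 2) ^ k = A ^ 2 + 4 := by simpa [Zsqrtd.norm_def, sq] using hN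
    exact (Int.odd_pow' hk.pos.ne').mp (this ▸ hA.pow.add_even (by decide))
  have hb : Even b := by
    by_contra hb
    rw [Int.not_even_iff_odd] at hb
    have ha : Even a := by
      by_contra ha
      rw [Int.not_even_iff_odd] at ha
      exact (Int.not_even_iff_odd.mpr hb.pow) ((Int.odd_add.mp hab).mp ha.pow)
    exact absurd (him ▸ odd_im_pow_of_even_of_odd ha hb hk) (by decide)
  refine ⟨by simpa [hb, parity_simps] using hab, ?_⟩
  have hdvd : b ∣ 2 := him ▸ dvd_im_pow a b k
  have := Int.le_of_dvd two_pos hdvd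
  have : -2 ≤ b := by linarith [Int.le_of_dvd two_pos (neg_dvd.mpr hdvd)]
  interval_cases b <;> simp_all

theorem two_pow_add_two_dvd_im_pow_sub {a b : ℤ} (hb : 2 ∣ b) {p r : ℕ} (hr : 2 ^ r ∣ p - 1) :
    2 ^ (r + 2) ∣ ((⟨a, b⟩ : ℤ[i]) ^ p).im - p * a ^ (p - 1) * b := by
  rcases Nat.lt_or_ge p 2 with hp | hp
  · interval_cases p <;> simp
  have hterm : ∀ j ∈ Finset.Ico 3 (p + 1), ((2 ^ (r + 2) : ℤ) : ℤ[i]) ∣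
      (⟨0, b⟩ : ℤ[i]) ^ j * (a : ℤ[i]) ^ (p - j) * (p.choose j : ℤ[i]) := by
    intro j hj
    obtain ⟨c, rfl⟩ := hb
    have hc : (⟨0, 2 * c⟩ : ℤ[i]) ^ j * (a : ℤ[i]) ^ (p - j) * (p.choose j : ℤ[i]) =
        ((2 ^ j * p.choose j : ℕ) : ℤ) * ((⟨0, c⟩ : ℤ[i]) ^ j * (a : ℤ[i]) ^ (p - j)) := by
      rw [show (⟨0, 2 * c⟩ : ℤ[i]) = 2 * ⟨0, c⟩ by ext <;> simp]
      push_cast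
      ring
    rw [hc]
    refine Dvd.dvd.mul_right (Int.cast_dvd_cast _ _ ?_) _
    exact_mod_cast Nat.two_pow_add_two_dvd_two_pow_mul_choose (Finset.mem_Ico.mp hj).1 hr
  have hγ : (⟨a, b⟩ : ℤ[i]) = ⟨0, b⟩ + a := by ext <;> simp
  rw [hγ, add_pow, ← Finset.sum_range_add_sum_Ico _ (show 3 ≤ p + 1 by omega)]
  set S := ∑ j ∈ Finset.Ico 3 (p + 1),
    (⟨0, b⟩ : ℤ[i]) ^ j * (a : ℤ[i]) ^ (p - j) * (p.choose j : ℤ[i])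
  have hS : 2 ^ (r + 2) ∣ S.im := ((Zsqrtd.intCast_dvd _ _).mp (Finset.dvd_sum hterm)).2
  -- of the terms `j < 3`, only `j = 1` has a nonzero imaginary part
  simp only [Finset.sum_range_succ, Finset.sum_range_zero, pow_zero, pow_one, sq, tsub_zero,
    Nat.choose_zero_right, Nat.choose_one_right, Zsqrtd.im_add, Zsqrtd.im_mul, Zsqrtd.re_mul,
    Zsqrtd.im_zero, Zsqrtd.im_one, Zsqrtd.re_one, Zsqrtd.im_natCast, Zsqrtd.re_natCast,
    ← Int.cast_pow, Zsqrtd.re_intCast, Zsqrtd.im_intCast]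
  convert hS using 1
  ring

theorem eq_one_of_im_mk_two_pow_eq_two {a : ℤ} (ha : Odd a) {p : ℕ} (hp : Odd p)
    (h : ((⟨a, 2⟩ : ℤ[i]) ^ p).im = 2) : p = 1 := by
  have step : ∀ r, 1 ≤ r → 2 ^ r ∣ p - 1 → 2 ^ (r + 1) ∣ p - 1 := by
    intro r hr hdvd
    have h1 := two_pow_add_two_dvd_im_pow_sub (a := a) (dvd_refl 2) hdvd
    have h2 := (Int.two_pow_add_two_dvd_pow_sub_one ha hr hdvd).mul_left (2 * p)
    rw [h] at h1
    have h3 : 2 * 2 ^ (r + 1) ∣ (2 : ℤ) * ((p - 1 : ℕ) : ℤ) := by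
      rw [show (2 : ℤ) * 2 ^ (r + 1) = 2 ^ (r + 2) by ring]
      push_cast [hp.pos]
      rw [show (2 : ℤ) * (p - 1) = -((2 - p * a ^ (p - 1) * 2) + 2 * p * (a ^ (p - 1) - 1)) by
        ring]
      exact (dvd_add h1 h2).neg_right
    exact_mod_cast (mul_dvd_mul_iff_left two_ne_zero).mp h3
  have hall : ∀ r, 1 ≤ r → 2 ^ r ∣ p - 1 := by
    intro r hr
    induction r, hr using Nat.le_induction with
    | base => exact even_iff_two_dvd.mp (Nat.Odd.sub_odd hp odd_one)
    | succ r hr ih => exact step r hr ih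
  have := Nat.eq_zero_of_dvd_of_lt (hall p hp.pos) ((Nat.sub_le p 1).trans_lt Nat.lt_two_pow_self)
  have := hp.pos
  omega

theorem mod_four_eq_three_of_im_mk_neg_two_pow_eq_two {a : ℤ} (ha : Odd a) {p : ℕ} (hp : Odd p)
    (h : ((⟨a, -2⟩ : ℤ[i]) ^ p).im = 2) : p % 4 = 3 := by
  have hp1 : 2 ^ 1 ∣ p - 1 := even_iff_two_dvd.mp (Nat.Odd.sub_odd hp odd_one)
  have h1 := two_pow_add_two_dvd_im_pow_sub (a := a) (b := -2) (by norm_num) hp1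
  have h2 := (Int.two_pow_add_two_dvd_pow_sub_one ha le_rfl hp1).mul_left (2 * p)
  rw [h] at h1
  have h3 : (8 : ℤ) ∣ 2 * (p + 1) := by
    rw [show (2 : ℤ) * (p + 1) = (2 - p * a ^ (p - 1) * -2) - 2 * p * (a ^ (p - 1) - 1) by ring]
    exact dvd_sub h1 h2
  omega

theorem sq_eq_one_of_im_mk_neg_two_pow_eq_two {a : ℤ} (ha : Odd a) {p : ℕ} (hp : p % 4 = 3)
    (h : ((⟨a, -2⟩ : ℤ[i]) ^ p).im = 2) : a ^ 2 = 1 := by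
  obtain ⟨w, rfl⟩ : ∃ w, p = 3 + 2 * 2 * w := ⟨p / 4, by omega⟩
  have hdvd := re_pow_dvd_im_pow_add_sub ⟨a, -2⟩ 2 w 3
  have hre : ((⟨a, -2⟩ : ℤ[i]) ^ 2).re = a ^ 2 - 4 := by simp only [sq, Zsqrtd.re_mul]; ring
  have hnorm : Zsqrtd.norm (⟨a, -2⟩ : ℤ[i]) = a ^ 2 + 4 := by rw [Zsqrtd.norm_def]; ring
  have him : ((⟨a, -2⟩ : ℤ[i]) ^ 3).im = 8 - 6 * a ^ 2 := by
    simp only [pow_succ, pow_zero, one_mul, Zsqrtd.re_mul, Zsqrtd.im_mul]; ring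
  rw [h, hre, hnorm, him] at hdvd
  have hcong : 2 - (-(a ^ 2 + 4) ^ 2) ^ w * (8 - 6 * a ^ 2) ≡ 2 * (1 + 8 * (-64) ^ w)
      [ZMOD a ^ 2 - 4] := by
    have h4 : a ^ 2 ≡ 4 [ZMOD a ^ 2 - 4] := Int.modEq_iff_dvd.mpr ⟨-1, by ring⟩
    calc 2 - (-(a ^ 2 + 4) ^ 2) ^ w * (8 - 6 * a ^ 2)
        ≡ 2 - (-(4 + 4) ^ 2) ^ w * (8 - 6 * 4) [ZMOD a ^ 2 - 4] := by gcongr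
      _ = 2 * (1 + 8 * (-64) ^ w) := by ring
  have hodd : IsCoprime (a ^ 2 - 4) 2 := Int.isCoprime_two_right.mpr (ha.pow.sub_even (by decide))
  have hdvd' : a ^ 2 - 4 ∣ 1 + 8 * (-64) ^ w :=
    hodd.dvd_of_dvd_mul_left ((Int.ModEq.dvd_iff hcong).mp hdvd)
  by_contra hne
  have h9 : 9 ≤ a ^ 2 := by
    have h1 : a ≠ 1 ∧ a ≠ -1 := by constructor <;> rintro rfl <;> norm_num at hne
    obtain ⟨c, rfl⟩ := ha
    rcases (by omega : 1 ≤ c ∨ c ≤ -2) with hc | hc <;> nlinarith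
  obtain ⟨N, hN⟩ : ∃ N : ℕ, (N : ℤ) = a ^ 2 - 4 :=
    ⟨(a ^ 2 - 4).toNat, Int.toNat_of_nonneg (by linarith)⟩
  have h8 := Int.eight_dvd_sq_sub_one_of_odd ha
  rw [← hN] at hdvd'
  exact Int.not_natCast_dvd_one_add_eight_mul_neg_sixty_four_pow (by omega) w hdvd'

/-- As `5 ^ 2 = -1` in `ZMod 13`, `Im z` is read off from the two images of `z` in `ZMod 13`;
by Fermat's little theorem these depend only on `p % 12` for `z = (a - 2i) ^ p`. -/
theorem mod_twelve_eq_three_of_im_mk_neg_two_pow_eq_two {a : ℤ} (ha : a ^ 2 = 1) {p : ℕ}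
    (hp : Odd p) (h : ((⟨a, -2⟩ : ℤ[i]) ^ p).im = 2) : p % 12 = 3 := by
  let φ : ℤ[i] →+* ZMod 13 := Zsqrtd.lift ⟨5, by decide⟩
  let ψ : ℤ[i] →+* ZMod 13 := Zsqrtd.lift ⟨8, by decide⟩
  have key : φ (⟨a, -2⟩ ^ p) - ψ (⟨a, -2⟩ ^ p) = 2 * (5 - 8) := by
    simp only [φ, ψ, Zsqrtd.lift_apply_apply, h]
    push_cast
    ring
  simp only [map_pow, φ, ψ, Zsqrtd.lift_apply_apply] at key
  push_cast at key
  have ha' : (a : ZMod 13) ^ 2 = 1 := by exact_mod_cast congrArg (Int.cast : ℤ → ZMod 13) ha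
  have hper : ∀ x : ZMod 13, x ^ 2 = 1 → (x + -2 * 5) ^ 12 = 1 ∧ (x + -2 * 8) ^ 12 = 1 := by
    decide
  have hcheck : ∀ x : ZMod 13, x ^ 2 = 1 → ∀ r < 12, r % 2 = 1 →
      (x + -2 * 5) ^ r - (x + -2 * 8) ^ r = 2 * (5 - 8) → r = 3 := by
    decide
  rw [pow_eq_pow_mod p (hper _ ha').1, pow_eq_pow_mod p (hper _ ha').2] at key
  exact hcheck _ ha' _ (Nat.mod_lt _ (by norm_num)) (by rcases hp with ⟨c, rfl⟩; omega) key

end GaussianInt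

open GaussianInt in
theorem Int.eq_eleven_or_eq_neg_eleven_of_sq_add_four_eq_pow {A y : ℤ} (hA : Odd A) {k : ℕ}
    (hk : 2 ≤ k) (h : A ^ 2 + 4 = y ^ k) : A = 11 ∨ A = -11 := by
  have hkodd : Odd k := Nat.not_even_iff_odd.mp fun ⟨m, hm⟩ =>
    Int.sq_add_four_ne_sq hA (y ^ m) (by rw [h, hm, ← two_mul, pow_mul'])
  obtain ⟨⟨a, b⟩, hγ⟩ := exists_pow_eq_mk_two_of_sq_add_four_eq_pow hA hkodd h
  have him : ((⟨a, b⟩ : ℤ[i]) ^ k).im = 2 := by rw [hγ]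
  obtain ⟨ha, rfl | rfl⟩ := odd_and_eq_two_or_neg_two_of_pow_eq_mk_two hA hkodd hγ
  · exact absurd (eq_one_of_im_mk_two_pow_eq_two ha hkodd him) (by omega)
  have ha2 := sq_eq_one_of_im_mk_neg_two_pow_eq_two ha
    (mod_four_eq_three_of_im_mk_neg_two_pow_eq_two ha hkodd him) him
  obtain ⟨m, rfl⟩ : 3 ∣ k := by
    have := mod_twelve_eq_three_of_im_mk_neg_two_pow_eq_two ha2 hkodd him
    omega
  have hcube : (⟨a, -2⟩ : ℤ[i]) ^ 3 = ⟨-11 * a, 2⟩ := by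
    ext <;> simp only [pow_succ, pow_zero, one_mul, Zsqrtd.re_mul, Zsqrtd.im_mul]
    · linear_combination a * ha2
    · linear_combination (-6) * ha2
  rw [pow_mul, hcube] at hγ
  obtain rfl : m = 1 := eq_one_of_im_mk_two_pow_eq_two ((by decide : Odd (-11 : ℤ)).mul ha)
    (Nat.Odd.of_mul_right hkodd) (by rw [hγ])
  have hAa : A = -11 * a := (congrArg Zsqrtd.re hγ).symm.trans (by simp)
  rcases sq_eq_one_iff.mp ha2 with rfl | rfl <;> omega

theorem stmt_7_general (A : ℕ) (q k : ℕ) (hqodd : Odd q) (hk : 2 ≤ k) (h : A ^ 2 + 4 = q ^ k) :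
    A = 2 ∨ A = 11 := by
  have hA : Odd (A : ℤ) := by
    have h' : Odd (A ^ 2 + 4) := h ▸ hqodd.pow
    have : Odd (A * A) := by simpa [parity_simps, sq] using h'
    exact_mod_cast Nat.Odd.of_mul_right this
  have := Int.eq_eleven_or_eq_neg_eleven_of_sq_add_four_eq_pow hA hk (y := q) (by exact_mod_cast h)
  omega

/-- Let A be a positive integer not divisible by 4 and suppose A² + 4 = q^k for
an odd prime q and integer k ≥ 2. Then A = 2 or A = 11. -/
theorem stmt_7 (A : ℕ) (hA : 0 < A) (h4 : ¬ 4 ∣ A) (q k : ℕ) (hq : q.Prime)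
    (hqodd : Odd q) (hk : 2 ≤ k) (h : A ^ 2 + 4 = q ^ k) :
    A = 2 ∨ A = 11 :=
  stmt_7_general A q k hqodd hk h
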